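/- arXiv:2502.14733 — 2 statements merged into one kernel-verified Lean document; each statement's English description precedes it below -/
import Mathlib

section
/- Any connected union of finitely many obtuse convex bodies in ℝ² is orthogonally connected. -/
open Set MeasureTheory Bornology
open scoped ENNReal

noncomputable section

/-- `ℝ^d` as Euclidean space. -/
abbrev EucR (d : ℕ) := EuclideanSpace ℝ (Fin d)

/-- The segment from `x` to `y` is parallel to a coordinate axis
(all coordinates except possibly one agree). -/
def IsOrthSeg {d : ℕ} (x y : EucR d) : Prop :=
  ∃ i : Fin d, ∀ j, j ≠ i → x j = y j

/-- `p 0, p 1, …, p n` is an orthogonal polygonal path contained in `S`. -/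
def IsOrthPathIn {d : ℕ} (S : Set (EucR d)) (p : ℕ → EucR d) (n : ℕ) : Prop :=
  ∀ k, k < n → IsOrthSeg (p k) (p (k + 1)) ∧ segment ℝ (p k) (p (k + 1)) ⊆ S

/-- `S` is orthogonally connected. -/
def OrthConnected {d : ℕ} (S : Set (EucR d)) : Prop :=
  ∀ x ∈ S, ∀ y ∈ S, ∃ n : ℕ, ∃ p : ℕ → EucR d,
    p 0 = x ∧ p n = y ∧ IsOrthPathIn S p n

/-- An orthogonal path is a staircase if all edges parallel to the same axis
point in the same direction. -/
def IsStaircaseIn {d : ℕ} (S : Set (EucR d)) (p : ℕ → EucR d) (n : ℕ) : Prop :=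
  IsOrthPathIn S p n ∧
    ∀ k, k < n → ∀ l, l < n → ∀ i : Fin d,
      (∀ j, j ≠ i → p k j = p (k + 1) j) → (∀ j, j ≠ i → p l j = p (l + 1) j) →
        0 ≤ (p (k + 1) i - p k i) * (p (l + 1) i - p l i)

/-- `S` is staircase connected. -/
def StaircaseConnected {d : ℕ} (S : Set (EucR d)) : Prop :=
  ∀ x ∈ S, ∀ y ∈ S, ∃ n : ℕ, ∃ p : ℕ → EucR d,
    p 0 = x ∧ p n = y ∧ IsStaircaseIn S p n

/-- `S` is orthogonally convex. -/
def OrthConvex {d : ℕ} (S : Set (EucR d)) : Prop :=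
  ∀ x ∈ S, ∀ y ∈ S, IsOrthSeg x y → segment ℝ x y ⊆ S

/-- A convex body: compact convex with nonempty interior. -/
def IsConvexBody {d : ℕ} (K : Set (EucR d)) : Prop :=
  Convex ℝ K ∧ IsCompact K ∧ (interior K).Nonempty

/-- The point of `ℝ²` with coordinates `(a, b)`. -/
def pt2 (a b : ℝ) : EucR 2 := (WithLp.equiv 2 (Fin 2 → ℝ)).symm ![a, b]

/-- Horizontal width of `S` at `x`: the length of the connected component
containing `x` of the intersection of `S` with the horizontal line through `x`. -/
def hw (S : Set (EucR 2)) (x : EucR 2) : ℝ≥0∞ :=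
  volume (connectedComponentIn {t : ℝ | pt2 t (x 1) ∈ S} (x 0))

/-- Vertical width of `S` at `x`. -/
def vw (S : Set (EucR 2)) (x : EucR 2) : ℝ≥0∞ :=
  volume (connectedComponentIn {t : ℝ | pt2 (x 0) t ∈ S} (x 1))

/-- The set of unit directions from `x` towards points of `K`. -/
def dirSet (x : EucR 2) (K : Set (EucR 2)) : Set (EucR 2) :=
  {u | ∃ y ∈ K, y ≠ x ∧ u = ‖y - x‖⁻¹ • (y - x)}

/-- `α_x(K)`: the angular (1-dimensional Hausdorff) measure of the set of unit
directions from `x` towards other points of `K`. -/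
def angMeasure (x : EucR 2) (K : Set (EucR 2)) : ℝ≥0∞ :=
  μH[1] (dirSet x K)

/-- The half-line from `x` through `y`. -/
def rayFrom (x y : EucR 2) : Set (EucR 2) := {z | ∃ t : ℝ, 0 ≤ t ∧ z = x + t • (y - x)}

/-- `T_x(K)`: the union of the half-lines from `x` through the points of `K \ {x}`. -/
def TCone (x : EucR 2) (K : Set (EucR 2)) : Set (EucR 2) := ⋃ y ∈ K \ {x}, rayFrom x y

/-- `K` is obtuse: at every boundary point `x`, either `α_x(K) > π/2`, or
`α_x(K) = π/2` and `T_x(K) \ {x}` is not open. -/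
def Obtuse (K : Set (EucR 2)) : Prop :=
  ∀ x ∈ frontier K,
    ENNReal.ofReal (Real.pi / 2) < angMeasure x K ∨
      (angMeasure x K = ENNReal.ofReal (Real.pi / 2) ∧ ¬ IsOpen (TCone x K \ {x}))

/-- Inclusion of `ℝ² × ℝ` into `ℝ³`. -/
def incl3 (q : EucR 2) (t : ℝ) : EucR 3 := (WithLp.equiv 2 (Fin 3 → ℝ)).symm ![q 0, q 1, t]

/-- A piece of a continuum `C`: the closure of a connected component of
`C \ {x}` for some cut point `x` of `C`. -/
def IsPiece (C P : Set (EucR 2)) : Prop :=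
  ∃ x ∈ C, ¬ IsPreconnected (C \ {x}) ∧
    ∃ y ∈ C \ {x}, P = closure (connectedComponentIn (C \ {x}) y)

/-- `f` is unimodal on `[a,b]`: non-decreasing on `[a,c]`, non-increasing on `[c,b]`
for some `c ∈ (a,b)`. -/
def Unimodal (f : ℝ → ℝ) (a b : ℝ) : Prop :=
  ∃ c ∈ Ioo a b, MonotoneOn f (Icc a c) ∧ AntitoneOn f (Icc c b)

/-- `a` is an s-extreme point of `M`: it belongs to a staircase in `M` only as an
endpoint. -/
def SExtreme (M : Set (EucR 2)) (a : EucR 2) : Prop :=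
  a ∈ M ∧ ∀ n : ℕ, ∀ γ : ℕ → EucR 2, IsStaircaseIn M γ n →
    a ∈ ⋃ k ∈ Set.Iio n, segment ℝ (γ k) (γ (k + 1)) → a = γ 0 ∨ a = γ n

/-- `M ⊆ ℝ²` is a strip: the preimage of an interval of `ℝ` under a nonzero
linear functional (this includes half-planes and the whole plane). -/
def IsStrip (M : Set (EucR 2)) : Prop :=
  ∃ f : EucR 2 →ₗ[ℝ] ℝ, f ≠ 0 ∧ ∃ I : Set ℝ, I.OrdConnected ∧ M = f ⁻¹' I

end

/-! Orthogonal reachability is an equivalence relation, and on a preconnected set it is global as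
soon as it holds locally. This settles open connected sets, and reduces a connected union of
closed sets to its members. In an obtuse convex body `K` every point reaches the open convex
interior by axis-parallel segments: a point inside a nondegenerate chord sees the interior along
one of the axes, and an extreme boundary point `x` has an axis-parallel chord, since otherwise `K`
lies in an open quadrant at `x`, which forces `α_x(K) ≤ π/2`, with equality only if
`T_x(K) \ {x}` is that whole open quadrant. -/

open Topology

variable {d : ℕ}

lemma IsOrthSeg.symm {x y : EucR d} (h : IsOrthSeg x y) : IsOrthSeg y x :=
  let ⟨i, hi⟩ := h; ⟨i, fun j hj => (hi j hj).symm⟩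

lemma IsOrthSeg.of_mem_segment {x y z : EucR d} (h : IsOrthSeg x y) (hz : z ∈ segment ℝ x y) :
    IsOrthSeg x z := by
  obtain ⟨i, hi⟩ := h
  obtain ⟨s, t, -, -, hst, rfl⟩ := hz
  refine ⟨i, fun j hj => ?_⟩
  simp [← hi j hj, ← add_mul, hst]

lemma isOrthSeg_iff_exists_eq {x y : EucR 2} : IsOrthSeg x y ↔ ∃ i, x i = y i := by
  constructor <;> rintro ⟨i, hi⟩ <;> fin_cases i
  · exact ⟨1, hi 1 (by decide)⟩
  · exact ⟨0, hi 0 (by decide)⟩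
  · exact ⟨1, fun j hj => by fin_cases j <;> simp_all⟩
  · exact ⟨0, fun j hj => by fin_cases j <;> simp_all⟩

lemma exists_mem_segment_apply_eq {q w : EucR d} {i : Fin d} {c : ℝ} (hc : c ∈ uIcc (q i) (w i)) :
    ∃ z ∈ segment ℝ q w, z i = c := by
  rw [← segment_eq_uIcc, ← show _ = segment ℝ (q i) (w i) from
    image_segment ℝ (EuclideanSpace.proj i : EucR d →L[ℝ] ℝ).toLinearMap.toAffineMap q w] at hc
  simpa using hc

def OrthReachable (S : Set (EucR d)) : EucR d → EucR d → Prop :=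
  Relation.ReflTransGen fun x y => IsOrthSeg x y ∧ segment ℝ x y ⊆ S

namespace OrthReachable

variable {S T : Set (EucR d)} {x y z : EucR d}

lemma refl : OrthReachable S x x :=
  Relation.ReflTransGen.refl

lemma single (h : IsOrthSeg x y) (hS : segment ℝ x y ⊆ S) : OrthReachable S x y :=
  Relation.ReflTransGen.single ⟨h, hS⟩

lemma trans (hxy : OrthReachable S x y) (hyz : OrthReachable S y z) : OrthReachable S x z :=
  Relation.ReflTransGen.trans hxy hyz

lemma symm (h : OrthReachable S x y) : OrthReachable S y x := by
  induction h with
  | refl => exact .refl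
  | tail _ hyz ih => exact ih.head ⟨hyz.1.symm, by rw [segment_symm]; exact hyz.2⟩

lemma mono (hST : S ⊆ T) (h : OrthReachable S x y) : OrthReachable T x y :=
  Relation.ReflTransGen.mono (fun _ _ h => ⟨h.1, h.2.trans hST⟩) _ _ h

end OrthReachable

lemma Convex.orthReachable_of_isOrthSeg {K : Set (EucR d)} (hK : Convex ℝ K) {x y : EucR d}
    (hx : x ∈ K) (hy : y ∈ K) (h : IsOrthSeg x y) : OrthReachable K x y :=
  .single h (hK.segment_subset hx hy)

lemma orthReachable_iff_exists_path {S : Set (EucR d)} {x y : EucR d} :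
    OrthReachable S x y ↔ ∃ n : ℕ, ∃ p : ℕ → EucR d, p 0 = x ∧ p n = y ∧ IsOrthPathIn S p n := by
  constructor
  · intro h
    induction h with
    | refl => exact ⟨0, fun _ => x, rfl, rfl, fun k hk => absurd hk k.not_lt_zero⟩
    | @tail y z _ hyz ih =>
      obtain ⟨n, p, hp0, hpn, hp⟩ := ih
      refine ⟨n + 1, Function.update p (n + 1) z, ?_, by simp, fun k hk => ?_⟩
      · simpa using hp0
      · rcases Nat.lt_succ_iff_lt_or_eq.1 hk with hk | rfl
        · simpa [Function.update_of_ne (by omega : k ≠ n + 1),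
            Function.update_of_ne (by omega : k + 1 ≠ n + 1)] using hp k hk
        · simpa [hpn] using hyz
  · rintro ⟨n, p, rfl, rfl, hp⟩
    suffices ∀ k ≤ n, OrthReachable S (p 0) (p k) from this n le_rfl
    intro k hk
    induction k with
    | zero => exact .refl
    | succ k ih => exact (ih (by omega)).tail (hp k (by omega))

lemma orthConnected_iff {S : Set (EucR d)} :
    OrthConnected S ↔ ∀ x ∈ S, ∀ y ∈ S, OrthReachable S x y := by
  simp only [OrthConnected, orthReachable_iff_exists_path]

lemma orthConnected_of_eventually_orthReachable {S : Set (EucR d)} (hS : IsPreconnected S)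
    (hloc : ∀ x ∈ S, ∀ᶠ y in 𝓝[S] x, OrthReachable S x y) : OrthConnected S :=
  orthConnected_iff.2 fun _ hx _ hy => hS.induction₂' _
    (fun x hx => (hloc x hx).mono fun _ h => ⟨h, h.symm⟩)
    (fun _ _ _ _ _ _ => OrthReachable.trans) hx hy

/-- Replace the coordinates of `x` by those of `y` one at a time: every intermediate point is at
most as far from `x` as `y` is. -/
lemma orthReachable_ball {x y : EucR d} {r : ℝ} (hy : y ∈ Metric.ball x r) :
    OrthReachable (Metric.ball x r) x y := by
  let p : ℕ → EucR d := fun k => WithLp.toLp 2 fun j => if (j : ℕ) < k then y j else x j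
  have hp : ∀ k, p k ∈ Metric.ball x r := fun k => by
    refine lt_of_le_of_lt ?_ (Metric.mem_ball.1 hy)
    rw [EuclideanSpace.dist_eq, EuclideanSpace.dist_eq]
    gcongr with j
    by_cases hj : (j : ℕ) < k <;> simp [p, hj]
  suffices ∀ k ≤ d, OrthReachable (Metric.ball x r) x (p k) by
    convert this d le_rfl
    ext j
    simp [p, j.isLt]
  intro k hk
  induction k with
  | zero => convert OrthReachable.refl; ext j; simp [p]
  | succ k ih =>
    refine (ih (by omega)).tail ⟨⟨⟨k, hk⟩, fun j hj => ?_⟩,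
      (convex_ball x r).segment_subset (hp k) (hp (k + 1))⟩
    have : (j : ℕ) < k ↔ (j : ℕ) < k + 1 := by
      have : (j : ℕ) ≠ k := fun h => hj (Fin.ext h)
      omega
    simp only [p, this]

lemma IsOpen.orthConnected {U : Set (EucR d)} (hU : IsOpen U) (hc : IsPreconnected U) :
    OrthConnected U := by
  refine orthConnected_of_eventually_orthReachable hc fun x hx => ?_
  obtain ⟨r, hr, hball⟩ := Metric.isOpen_iff.1 hU x hx
  filter_upwards [nhdsWithin_le_nhds (Metric.ball_mem_nhds x hr)] with y hy
  exact (orthReachable_ball hy).mono hball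

/-- Near a point `x` of the union, every point of the union lies in a common member with `x`,
since the members avoiding `x` are closed. -/
lemma orthConnected_iUnion {ι : Type*} [Finite ι] {A : ι → Set (EucR d)}
    (hcl : ∀ i, IsClosed (A i)) (hA : ∀ i, OrthConnected (A i))
    (hc : IsPreconnected (⋃ i, A i)) : OrthConnected (⋃ i, A i) := by
  refine orthConnected_of_eventually_orthReachable hc fun x hx => ?_
  have hnear : ∀ᶠ y in 𝓝 x, ∀ i, x ∉ A i → y ∉ A i :=
    Filter.eventually_all.2 fun i => by
      by_cases hxi : x ∈ A i
      · exact .of_forall fun _ h => absurd hxi h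
      · filter_upwards [(hcl i).isOpen_compl.mem_nhds hxi] with y hy _ using hy
  filter_upwards [nhdsWithin_le_nhds hnear, self_mem_nhdsWithin] with y hy hyA
  obtain ⟨i, hyi⟩ := mem_iUnion.1 hyA
  have hxi : x ∈ A i := by_contra fun h => hy i h hyi
  exact (orthConnected_iff.1 (hA i) x hxi y hyi).mono (subset_iUnion A i)

lemma Convex.mul_sub_pos_of_forall_ne {T : Set (EucR d)} (hT : Convex ℝ T) {p w : EucR d}
    (hw : w ∈ T) (hmiss : ∀ q ∈ T, ∀ i, q i ≠ p i) {q : EucR d} (hq : q ∈ T) (i : Fin d) :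
    0 < (q i - p i) * (w i - p i) := by
  by_contra! h
  have hp : p i ∈ uIcc (q i) (w i) := by
    rw [mem_uIcc]
    rcases mul_nonpos_iff.1 h with h | h
    · exact Or.inr ⟨by linarith, by linarith⟩
    · exact Or.inl ⟨by linarith, by linarith⟩
  obtain ⟨z, hz, hzi⟩ := exists_mem_segment_apply_eq hp
  exact hmiss z (hT.segment_subset hq hw hz) i hzi

/-- Otherwise the interior of `K`, and with it `K`, lies in a closed orthant at `p`, which contains
no segment through `p`. -/
lemma Convex.exists_mem_interior_apply_eq {K : Set (EucR d)} (hK : Convex ℝ K)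
    (hint : (interior K).Nonempty) {a b p : EucR d} (ha : a ∈ K) (hb : b ∈ K) (hab : a ≠ b)
    (hp : p ∈ openSegment ℝ a b) : ∃ q ∈ interior K, ∃ i, q i = p i := by
  by_contra! hmiss
  obtain ⟨w, hw⟩ := hint
  have horth : ∀ q ∈ interior K, ∀ i, 0 < (q i - p i) * (w i - p i) := fun _ hq =>
    hK.interior.mul_sub_pos_of_forall_ne hw hmiss hq
  have hclosed : ∀ i, K ⊆ {q : EucR d | 0 ≤ (q i - p i) * (w i - p i)} := fun i => by
    refine subset_closure.trans ?_
    rw [← hK.closure_interior_eq_closure_of_nonempty_interior ⟨w, hw⟩]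
    exact closure_minimal (fun q hq => (horth q hq i).le)
      (isClosed_le continuous_const (by fun_prop))
  obtain ⟨s, t, hs, ht, hst, rfl⟩ := hp
  apply hab
  ext i
  have ha' := hclosed i ha
  have hb' := hclosed i hb
  have hw' := horth w hw i
  simp only [mem_ofPred_eq, PiLp.add_apply, PiLp.smul_apply, smul_eq_mul] at ha' hb' hw'
  obtain rfl : s = 1 - t := by linarith
  have key : (a i - b i) * (w i - ((1 - t) * a i + t * b i)) = 0 := by
    nlinarith [mul_nonneg ht.le hb', mul_nonneg hs.le ha']
  rcases mul_eq_zero.1 key with h | h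
  · linarith
  · simp [h] at hw'

section FeasibleCone

variable {E : Type*} [AddCommGroup E] [Module ℝ E]

def feasibleCone (x : E) (K : Set E) : Set E := {v | ∃ r : ℝ, 0 < r ∧ x + r • v ∈ K}

variable {x u v : E} {K : Set E}

lemma smul_mem_feasibleCone (hv : v ∈ feasibleCone x K) {a : ℝ} (ha : 0 < a) :
    a • v ∈ feasibleCone x K := by
  obtain ⟨r, hr, hrv⟩ := hv
  exact ⟨r / a, by positivity, by rwa [smul_smul, div_mul_cancel₀ r ha.ne']⟩

lemma Convex.add_mem_feasibleCone (hK : Convex ℝ K) (hu : u ∈ feasibleCone x K)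
    (hv : v ∈ feasibleCone x K) : u + v ∈ feasibleCone x K := by
  obtain ⟨r, hr, hru⟩ := hu
  obtain ⟨s, hs, hsv⟩ := hv
  refine ⟨r * s / (r + s), by positivity, ?_⟩
  convert hK hru hsv (a := s / (r + s)) (b := r / (r + s)) (by positivity) (by positivity)
    (by rw [← add_div, add_comm, div_self (by positivity)]) using 1
  match_scalars <;> field_simp
  ring

end FeasibleCone

/-- A missing point would confine `S` to one side of it. -/
lemma Set.OrdConnected.eq_Ioo_of_volume_le {S : Set ℝ} {a b : ℝ} (hS : S.OrdConnected)
    (hsub : S ⊆ Ioo a b) (hvol : ENNReal.ofReal (b - a) ≤ volume S) : S = Ioo a b := by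
  refine hsub.antisymm fun t ht => by_contra fun htS => ?_
  have hside : S ⊆ Ioo a t ∨ S ⊆ Ioo t b := by
    by_contra! h
    obtain ⟨s₁, hs₁, hs₁t⟩ := not_subset.1 h.1
    obtain ⟨s₂, hs₂, hs₂t⟩ := not_subset.1 h.2
    have h₁ : t ≤ s₁ := not_lt.1 fun h => hs₁t ⟨(hsub hs₁).1, h⟩
    have h₂ : s₂ ≤ t := not_lt.1 fun h => hs₂t ⟨h, (hsub hs₂).2⟩
    exact htS (hS.out hs₂ hs₁ ⟨h₂, h₁⟩)
  refine absurd hvol (not_le.2 ?_)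
  rcases hside with h | h
  · calc volume S ≤ volume (Ioo a t) := measure_mono h
      _ < ENNReal.ofReal (b - a) := by
        rw [Real.volume_Ioo]; exact (ENNReal.ofReal_lt_ofReal_iff (by linarith [ht.1, ht.2])).2
          (by linarith [ht.2])
  · calc volume S ≤ volume (Ioo t b) := measure_mono h
      _ < ENNReal.ofReal (b - a) := by
        rw [Real.volume_Ioo]; exact (ENNReal.ofReal_lt_ofReal_iff (by linarith [ht.1, ht.2])).2
          (by linarith [ht.1])

@[simp] lemma pt2_apply_zero (a b : ℝ) : pt2 a b 0 = a := rfl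
@[simp] lemma pt2_apply_one (a b : ℝ) : pt2 a b 1 = b := rfl

lemma norm_sq_eucR_two (v : EucR 2) : ‖v‖ ^ 2 = v 0 ^ 2 + v 1 ^ 2 := by
  simp [EuclideanSpace.norm_sq_eq, Fin.sum_univ_two]

section ArcPt

open Real

variable {ε : Fin 2 → ℝ}

/-- The quarter of the unit circle lying in the open quadrant `{v | ∀ i, 0 < ε i * v i}`,
parametrized by arc length on `(0, π/2)`. -/
noncomputable def arcPt (ε : Fin 2 → ℝ) (θ : ℝ) : EucR 2 := pt2 (ε 0 * cos θ) (ε 1 * sin θ)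

lemma sin_sub_smul_arcPt (ε : Fin 2 → ℝ) (θ₁ θ₂ c : ℝ) :
    sin (θ₂ - θ₁) • arcPt ε c = sin (θ₂ - c) • arcPt ε θ₁ + sin (c - θ₁) • arcPt ε θ₂ := by
  ext i
  fin_cases i <;> simp [arcPt, sin_sub] <;> ring

variable (hε : ∀ i, ε i ^ 2 = 1)
include hε

lemma lipschitzWith_arcPt : LipschitzWith 1 (arcPt ε) := by
  refine LipschitzWith.of_dist_le_mul fun a b => ?_
  rw [NNReal.coe_one, one_mul, ← pow_le_pow_iff_left₀ dist_nonneg dist_nonneg two_ne_zero,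
    dist_eq_norm, norm_sq_eucR_two, Real.dist_eq, sq_abs]
  simp only [arcPt, PiLp.sub_apply, pt2_apply_zero, pt2_apply_one, ← mul_sub,
    mul_pow, hε, one_mul]
  have hcos : 1 - (a - b) ^ 2 / 2 ≤ cos (a - b) := one_sub_sq_div_two_le_cos
  nlinarith [cos_sub a b, sin_sq_add_cos_sq a, sin_sq_add_cos_sq b]

lemma exists_arcPt_eq {u : EucR 2} (hu : ‖u‖ = 1) (hQ : ∀ i, 0 < ε i * u i) :
    ∃ θ ∈ Ioo 0 (π / 2), arcPt ε θ = u := by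
  have hsq : (ε 0 * u 0) ^ 2 + (ε 1 * u 1) ^ 2 = 1 := by
    simp only [mul_pow, hε, one_mul]
    rw [← norm_sq_eucR_two, hu, one_pow]
  have h0 := hQ 0
  have h1 := hQ 1
  have hlt : ε 0 * u 0 < 1 := by nlinarith
  refine ⟨arccos (ε 0 * u 0), ⟨arccos_pos.2 hlt, arccos_lt_pi_div_two.2 h0⟩, ?_⟩
  have hsin : sin (arccos (ε 0 * u 0)) = ε 1 * u 1 := by
    rw [sin_arccos, ← hsq, add_sub_cancel_left, sqrt_sq h1.le]
  ext i
  fin_cases i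
  · simp [arcPt, cos_arccos (by linarith) hlt.le, ← mul_assoc, ← sq, hε]
  · simp [arcPt, hsin, ← mul_assoc, ← sq, hε]

end ArcPt

section Quadrant

open Real

variable {ε : Fin 2 → ℝ} {K : Set (EucR 2)} {x : EucR 2}

lemma mem_dirSet_iff {u : EucR 2} : u ∈ dirSet x K ↔ ‖u‖ = 1 ∧ u ∈ feasibleCone x K := by
  constructor
  · rintro ⟨y, hy, hyx, rfl⟩
    have hpos : 0 < ‖y - x‖ := norm_pos_iff.2 (sub_ne_zero.2 hyx)
    refine ⟨by rw [norm_smul, norm_inv, norm_norm, inv_mul_cancel₀ hpos.ne'], ‖y - x‖, hpos, ?_⟩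
    rwa [smul_inv_smul₀ hpos.ne', add_sub_cancel]
  · rintro ⟨hu, r, hr, hrK⟩
    refine ⟨x + r • u, hrK, fun h => ?_, ?_⟩
    · simp_all [hr.ne']
    · rw [add_sub_cancel_left, norm_smul, Real.norm_of_nonneg hr.le, hu, mul_one,
        inv_smul_smul₀ hr.ne']

lemma mem_TCone_diff_iff {z : EucR 2} :
    z ∈ TCone x K \ {x} ↔ z ≠ x ∧ z - x ∈ feasibleCone x K := by
  simp only [TCone, rayFrom, Set.mem_sdiff, mem_iUnion, mem_ofPred_eq, mem_singleton_iff]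
  constructor
  · rintro ⟨⟨y, ⟨hy, hyx⟩, t, ht, rfl⟩, hzx⟩
    have htpos : 0 < t := ht.lt_of_ne (by rintro rfl; simp at hzx)
    refine ⟨hzx, t⁻¹, inv_pos.2 htpos, ?_⟩
    rwa [add_sub_cancel_left, inv_smul_smul₀ htpos.ne', add_sub_cancel]
  · rintro ⟨hzx, r, hr, hrK⟩
    refine ⟨⟨x + r • (z - x), ⟨hrK, fun h => hzx ?_⟩, r⁻¹, inv_nonneg.2 hr.le, ?_⟩, hzx⟩
    · simpa [hr.ne', sub_eq_zero] using h
    · rw [add_sub_cancel_left, inv_smul_smul₀ hr.ne', add_sub_cancel]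

def feasibleAngles (ε : Fin 2 → ℝ) (x : EucR 2) (K : Set (EucR 2)) : Set ℝ :=
  {θ ∈ Ioo 0 (π / 2) | arcPt ε θ ∈ feasibleCone x K}

lemma ordConnected_feasibleAngles (hK : Convex ℝ K) : (feasibleAngles ε x K).OrdConnected := by
  refine ordConnected_of_Ioo fun θ₁ h₁ θ₂ h₂ hlt c hc =>
    ⟨⟨h₁.1.1.trans hc.1, hc.2.trans h₂.1.2⟩, ?_⟩
  have hsin : ∀ {s t}, s < t → t - s ≤ θ₂ - θ₁ → 0 < sin (t - s) := fun hst hle =>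
    sin_pos_of_pos_of_lt_pi (by linarith) (by linarith [h₁.1.1, h₂.1.2, pi_pos])
  have hD := hsin hlt le_rfl
  have hcomb : sin (θ₂ - θ₁) • arcPt ε c ∈ feasibleCone x K := by
    rw [sin_sub_smul_arcPt]
    exact hK.add_mem_feasibleCone
      (smul_mem_feasibleCone h₁.2 (hsin hc.2 (by linarith [hc.1])))
      (smul_mem_feasibleCone h₂.2 (hsin hc.1 (by linarith [hc.2])))
  simpa [smul_smul, hD.ne'] using smul_mem_feasibleCone hcomb (inv_pos.2 hD)

variable (hε : ∀ i, ε i ^ 2 = 1) (hQ : ∀ y ∈ K, y ≠ x → ∀ i, 0 < ε i * (y i - x i))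
include hQ

lemma mul_pos_of_mem_feasibleCone {v : EucR 2} (hv : v ∈ feasibleCone x K) (hv0 : v ≠ 0)
    (i : Fin 2) : 0 < ε i * v i := by
  obtain ⟨r, hr, hrK⟩ := hv
  have := hQ _ hrK (by simpa [hr.ne'] using hv0) i
  simp only [PiLp.add_apply, PiLp.smul_apply, smul_eq_mul, add_sub_cancel_left] at this
  nlinarith

include hε

lemma angMeasure_le_volume_feasibleAngles : angMeasure x K ≤ volume (feasibleAngles ε x K) := by
  have hsub : dirSet x K ⊆ arcPt ε '' feasibleAngles ε x K := fun u hu => by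
    obtain ⟨hu1, hucone⟩ := mem_dirSet_iff.1 hu
    have hu0 : u ≠ 0 := by rintro rfl; simp at hu1
    obtain ⟨θ, hθ, rfl⟩ := exists_arcPt_eq hε hu1 (mul_pos_of_mem_feasibleCone hQ hucone hu0)
    exact ⟨θ, ⟨hθ, hucone⟩, rfl⟩
  calc angMeasure x K ≤ μH[1] (arcPt ε '' feasibleAngles ε x K) := measure_mono hsub
    _ ≤ μH[1] (feasibleAngles ε x K) := by
      simpa using (lipschitzWith_arcPt hε).hausdorffMeasure_image_le zero_le_one _
    _ = volume (feasibleAngles ε x K) := by rw [hausdorffMeasure_real]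

lemma angMeasure_le_pi_div_two : angMeasure x K ≤ ENNReal.ofReal (π / 2) :=
  calc angMeasure x K ≤ volume (feasibleAngles ε x K) := angMeasure_le_volume_feasibleAngles hε hQ
    _ ≤ volume (Ioo 0 (π / 2)) := measure_mono (fun _ h => h.1)
    _ = ENNReal.ofReal (π / 2) := by rw [Real.volume_Ioo, sub_zero]

lemma TCone_diff_eq_of_feasibleAngles_eq (hfull : feasibleAngles ε x K = Ioo 0 (π / 2)) :
    TCone x K \ {x} = {z | ∀ i, 0 < ε i * (z i - x i)} := by
  ext z
  rw [mem_TCone_diff_iff]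
  constructor
  · rintro ⟨hzx, hz⟩
    exact mul_pos_of_mem_feasibleCone hQ hz (sub_ne_zero.2 hzx)
  · intro hz
    have hzx : z ≠ x := by rintro rfl; simpa using hz 0
    have hpos : 0 < ‖z - x‖ := norm_pos_iff.2 (sub_ne_zero.2 hzx)
    obtain ⟨θ, hθ, hθu⟩ := exists_arcPt_eq hε (u := ‖z - x‖⁻¹ • (z - x))
      (by rw [norm_smul, norm_inv, norm_norm, inv_mul_cancel₀ hpos.ne'])
      (fun i => by simpa [mul_left_comm _ (‖z - x‖⁻¹)] using mul_pos (inv_pos.2 hpos) (hz i))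
    have hθK : θ ∈ feasibleAngles ε x K := by rwa [hfull]
    have hcone : ‖z - x‖⁻¹ • (z - x) ∈ feasibleCone x K := hθu ▸ hθK.2
    exact ⟨hzx, by simpa [smul_smul, hpos.ne'] using smul_mem_feasibleCone hcone hpos⟩

lemma isOpen_TCone_diff_of_angMeasure_eq (hK : Convex ℝ K)
    (heq : angMeasure x K = ENNReal.ofReal (π / 2)) : IsOpen (TCone x K \ {x}) := by
  have hfull : feasibleAngles ε x K = Ioo 0 (π / 2) :=
    (ordConnected_feasibleAngles hK).eq_Ioo_of_volume_le (fun _ h => h.1)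
      (by rw [sub_zero, ← heq]; exact angMeasure_le_volume_feasibleAngles hε hQ)
  rw [TCone_diff_eq_of_feasibleAngles_eq hε hQ hfull, ofPred_forall]
  exact isOpen_iInter_of_finite fun i => isOpen_lt continuous_const (by fun_prop)

end Quadrant

section ObtuseBody

variable {K : Set (EucR 2)} {x : EucR 2}

lemma Convex.exists_orthReachable_interior_of_mem_openSegment (hK : Convex ℝ K)
    (hint : (interior K).Nonempty) {a b p : EucR 2} (ha : a ∈ K) (hb : b ∈ K) (hab : a ≠ b)
    (hp : p ∈ openSegment ℝ a b) : ∃ q ∈ interior K, OrthReachable K p q := by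
  obtain ⟨q, hq, i, hqi⟩ := hK.exists_mem_interior_apply_eq hint ha hb hab hp
  exact ⟨q, hq, hK.orthReachable_of_isOrthSeg (hK.openSegment_subset ha hb hp)
    (interior_subset hq) (isOrthSeg_iff_exists_eq.2 ⟨i, hqi.symm⟩)⟩

/-- Otherwise `K \ {x}` is convex, as `x` is extreme, and misses both axes through `x`, hence
lies in an open quadrant at `x`. -/
lemma Convex.exists_isOrthSeg_of_mem_extremePoints (hK : Convex ℝ K)
    (hint : (interior K).Nonempty) (hob : Obtuse K) (hx : x ∈ K.extremePoints ℝ)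
    (hxi : x ∉ interior K) : ∃ y ∈ K, y ≠ x ∧ IsOrthSeg x y := by
  by_contra! hax
  obtain ⟨w, hw⟩ := hint
  have hwx : w ≠ x := fun h => hxi (h ▸ hw)
  have hquad : ∀ y ∈ K, y ≠ x → ∀ i, 0 < (y i - x i) * (w i - x i) := fun y hy hyx =>
    (hK.mem_extremePoints_iff_convex_sdiff.1 hx).2.mul_sub_pos_of_forall_ne
      ⟨interior_subset hw, hwx⟩
      (fun q hq i hqi => hax q hq.1 hq.2 (isOrthSeg_iff_exists_eq.2 ⟨i, hqi.symm⟩)) ⟨hy, hyx⟩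
  have hwi : ∀ i, w i - x i ≠ 0 := fun i h => by
    simpa [h] using hquad w (interior_subset hw) hwx i
  set ε : Fin 2 → ℝ := fun i => (w i - x i) / |w i - x i|
  have hε : ∀ i, ε i ^ 2 = 1 := fun i => by
    simp [ε, div_pow, sq_abs, hwi]
  have hQ : ∀ y ∈ K, y ≠ x → ∀ i, 0 < ε i * (y i - x i) := fun y hy hyx i => by
    rw [div_mul_eq_mul_div, mul_comm]
    exact div_pos (hquad y hy hyx i) (abs_pos.2 (hwi i))
  rcases hob x ⟨subset_closure hx.1, hxi⟩ with hlt | ⟨heq, hnotopen⟩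
  · exact not_le.2 hlt (angMeasure_le_pi_div_two hε hQ)
  · exact hnotopen (isOpen_TCone_diff_of_angMeasure_eq hε hQ hK heq)

lemma Convex.exists_orthReachable_interior (hK : Convex ℝ K) (hint : (interior K).Nonempty)
    (hob : Obtuse K) (hx : x ∈ K) : ∃ q ∈ interior K, OrthReachable K x q := by
  by_cases hxi : x ∈ interior K
  · exact ⟨x, hxi, .refl⟩
  by_cases hext : x ∈ K.extremePoints ℝ
  · obtain ⟨y, hy, hyx, hxy⟩ := hK.exists_isOrthSeg_of_mem_extremePoints hint hob hext hxi
    have hm := midpoint_mem_openSegment (𝕜 := ℝ) x y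
    obtain ⟨q, hq, hmq⟩ :=
      hK.exists_orthReachable_interior_of_mem_openSegment hint hx hy hyx.symm hm
    exact ⟨q, hq, (hK.orthReachable_of_isOrthSeg hx (hK.openSegment_subset hx hy hm)
      (hxy.of_mem_segment (openSegment_subset_segment _ _ _ hm))).trans hmq⟩
  · obtain ⟨a, ha, b, hb, hxab, hne⟩ :
        ∃ a ∈ K, ∃ b ∈ K, x ∈ openSegment ℝ a b ∧ ¬(a = x ∧ b = x) := by
      simpa [mem_extremePoints, hx] using hext
    have hab : a ≠ b := by
      rintro rfl
      simp only [openSegment_same, mem_singleton_iff] at hxab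
      exact hne ⟨hxab.symm, hxab.symm⟩
    exact hK.exists_orthReachable_interior_of_mem_openSegment hint ha hb hab hxab

lemma Convex.orthConnected_of_obtuse (hK : Convex ℝ K) (hint : (interior K).Nonempty)
    (hob : Obtuse K) : OrthConnected K := by
  have hinterior : OrthConnected (interior K) :=
    isOpen_interior.orthConnected hK.interior.isPreconnected
  refine orthConnected_iff.2 fun x hx y hy => ?_
  obtain ⟨p, hp, hxp⟩ := hK.exists_orthReachable_interior hint hob hx
  obtain ⟨q, hq, hyq⟩ := hK.exists_orthReachable_interior hint hob hy
  exact hxp.trans (((orthConnected_iff.1 hinterior p hp q hq).mono interior_subset).trans hyq.symm)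

end ObtuseBody

/-- Any connected union of finitely many obtuse convex bodies in `ℝ²` is
orthogonally connected. -/
theorem orthConnected_union_obtuse (n : ℕ) (A : Fin n → Set (EucR 2))
    (hA : ∀ i, IsConvexBody (A i)) (hob : ∀ i, Obtuse (A i))
    (hconn : IsConnected (⋃ i, A i)) :
    OrthConnected (⋃ i, A i) :=
  orthConnected_iUnion (fun i => (hA i).2.1.isClosed)
    (fun i => (hA i).1.orthConnected_of_obtuse (hA i).2.2 (hob i)) hconn.isPreconnected
end

section
/- Let A ⊆ ℝ² be compact, equal to the closure of its bounded connected interior, vertically convex, and normal (meaning f⁺(a) = f⁻(a) and f⁺(b) = f⁻(b), where [a,b] is the projection of A onto the x-axis). Then A is staircase connected if and only if both f⁺ and −f⁻ are unimodal on [a,b]. -/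
open Set MeasureTheory Bornology
open scoped ENNReal

/-!
Write `A` as the region between the graphs of `f⁻ ≤ f⁺` over `[a, b]`. Along a staircase every
coordinate is monotone, so a staircase joining two points of `A` meets each intermediate vertical
line inside the bounding box of its endpoints. Applied to two points of the upper (lower) graph,
this makes `f⁺` quasiconcave (`f⁻` quasiconvex). By normality `(a, f⁺ a)` is the only point of `A`
above `a`, so the staircase from it to `(b, f⁺ b)` leaves it horizontally; together with the same
at `b`, this moves a maximum of `f⁺` (a minimum of `f⁻`) into `(a, b)`, whence unimodality.

Conversely, unimodality makes `f⁺` quasiconcave and `f⁻` quasiconvex, so a horizontal segment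
lies in `A` as soon as its two endpoints do. Given `p ≤ q` coordinatewise, let `x*` be the
supremum of the abscissas `x ≤ q₀` at which a point of height at most `q₁` can be reached from
`p` by a north-east staircase. Since the interior of `A` is connected and `A` is the closure of
its interior, `A` contains a horizontal segment crossing each vertical line `x = x₀`,
`a < x₀ < b`; at the ends this follows from normality and unimodality. The segment through `x*`
lets the staircase advance beyond `x*`, so `x* = q₀` is reached and, from there, `q`. The other
three relative positions of `p` and `q` follow by reversing staircases and reflecting in the
`x`-axis.
-/

open Relation

theorem exists_lt_mem_uIcc_succ {α : Type*} [LinearOrder α] (f : ℕ → α) {v : α} {n : ℕ}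
    (hv : v ∈ uIcc (f 0) (f n)) : v = f 0 ∨ ∃ k < n, v ∈ uIcc (f k) (f (k + 1)) := by
  induction n with
  | zero => exact Or.inl (by simpa using hv)
  | succ n ih =>
    rcases uIcc_subset_uIcc_union_uIcc (b := f n) hv with hv | hv
    · rcases ih hv with h | ⟨k, hk, hvk⟩
      · exact Or.inl h
      · exact Or.inr ⟨k, by omega, hvk⟩
    · exact Or.inr ⟨n, by omega, hv⟩

theorem Relation.ReflTransGen.exists_seq {α : Type*} {r : α → α → Prop} {x y : α}
    (h : ReflTransGen r x y) :
    ∃ n, ∃ p : ℕ → α, p 0 = x ∧ p n = y ∧ ∀ k < n, r (p k) (p (k + 1)) := by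
  induction h with
  | refl => exact ⟨0, fun _ => x, rfl, rfl, fun k hk => absurd hk (Nat.not_lt_zero k)⟩
  | @tail w z _ hwz ih =>
    obtain ⟨n, p, h0, hn, hp⟩ := ih
    refine ⟨n + 1, Function.update p (n + 1) z, ?_, Function.update_self .., fun k hk => ?_⟩
    · rwa [Function.update_of_ne (by omega)]
    · rcases Nat.lt_succ_iff_lt_or_eq.1 hk with hk | rfl
      · rw [Function.update_of_ne (by omega), Function.update_of_ne (by omega)]
        exact hp k hk
      · rw [Function.update_self, Function.update_of_ne (by omega), hn]
        exact hwz

section Staircase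

variable {d : ℕ} {S : Set (EucR d)} {γ : ℕ → EucR d} {n : ℕ}

theorem IsStaircaseIn.mul_nonneg (h : IsStaircaseIn S γ n) (i : Fin d) {k l : ℕ} (hk : k < n)
    (hl : l < n) : 0 ≤ (γ (k + 1) i - γ k i) * (γ (l + 1) i - γ l i) := by
  have flat_or_along : ∀ m < n, γ (m + 1) i - γ m i = 0 ∨ ∀ j, j ≠ i → γ m j = γ (m + 1) j := by
    intro m hm
    obtain ⟨i₀, hi₀⟩ := (h.1 m hm).1
    by_cases hii : i₀ = i
    · exact Or.inr (hii ▸ hi₀)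
    · exact Or.inl (by rw [hi₀ i (Ne.symm hii), sub_self])
  rcases flat_or_along k hk with hk0 | hk'
  · simp [hk0]
  rcases flat_or_along l hl with hl0 | hl'
  · simp [hl0]
  exact h.2 k hk l hl i hk' hl'

theorem IsStaircaseIn.monotone_or_antitone (h : IsStaircaseIn S γ n) (i : Fin d) :
    (∀ k < n, γ k i ≤ γ (k + 1) i) ∨ ∀ k < n, γ (k + 1) i ≤ γ k i := by
  by_contra! hc
  obtain ⟨⟨k, hk, hk'⟩, l, hl, hl'⟩ := hc
  nlinarith [h.mul_nonneg i hl hk]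

theorem IsStaircaseIn.coord_mem_uIcc (h : IsStaircaseIn S γ n) (i : Fin d) {k : ℕ} (hk : k ≤ n) :
    γ k i ∈ uIcc (γ 0 i) (γ n i) := by
  set g : ℕ → ℝ := fun j => γ (min j n) i with hg
  have step : ∀ j, (j < n ∧ g j = γ j i ∧ g (j + 1) = γ (j + 1) i) ∨ g (j + 1) = g j := by
    intro j
    by_cases hj : j < n
    · exact Or.inl ⟨hj, by simp [hg, hj.le], by simp [hg, Nat.succ_le_of_lt hj]⟩
    · exact Or.inr (by simp [hg, show n ≤ j by omega, show n ≤ j + 1 by omega])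
  have h0 : g 0 = γ 0 i := by simp [hg]
  have hn : g n = γ n i := by simp [hg]
  have hgk : g k = γ k i := by simp [hg, hk]
  rw [← h0, ← hn, ← hgk]
  rcases h.monotone_or_antitone i with hmono | hanti
  · have : Monotone g := monotone_nat_of_le_succ fun j => by
      rcases step j with ⟨hj, e, e'⟩ | e
      · rw [e, e']; exact hmono j hj
      · exact e.ge
    exact Icc_subset_uIcc ⟨this (Nat.zero_le k), this hk⟩
  · have : Antitone g := antitone_nat_of_succ_le fun j => by
      rcases step j with ⟨hj, e, e'⟩ | e
      · rw [e, e']; exact hanti j hj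
      · exact e.le
    exact Icc_subset_uIcc' ⟨this hk, this (Nat.zero_le k)⟩

theorem image_coord_segment (x y : EucR d) (i : Fin d) :
    (fun z : EucR d => z i) '' segment ℝ x y = uIcc (x i) (y i) := by
  rw [← segment_eq_uIcc]
  exact image_segment ℝ (EuclideanSpace.proj i : EucR d →L[ℝ] ℝ).toLinearMap.toAffineMap x y

theorem coord_mem_uIcc_of_mem_segment {x y z : EucR d} (hz : z ∈ segment ℝ x y) (i : Fin d) :
    z i ∈ uIcc (x i) (y i) :=
  image_coord_segment x y i ▸ mem_image_of_mem _ hz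

theorem IsStaircaseIn.exists_mem_coord_eq (h : IsStaircaseIn S γ n) (h0 : γ 0 ∈ S) (i : Fin d)
    {v : ℝ} (hv : v ∈ uIcc (γ 0 i) (γ n i)) :
    ∃ z ∈ S, z i = v ∧ ∀ j, z j ∈ uIcc (γ 0 j) (γ n j) := by
  rcases exists_lt_mem_uIcc_succ (fun k => γ k i) hv with rfl | ⟨k, hk, hvk⟩
  · exact ⟨γ 0, h0, rfl, fun j => h.coord_mem_uIcc j (Nat.zero_le n)⟩
  · rw [← image_coord_segment] at hvk
    obtain ⟨z, hz, rfl⟩ := hvk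
    exact ⟨z, (h.1 k hk).2 hz, rfl, fun j => uIcc_subset_uIcc (h.coord_mem_uIcc j hk.le)
      (h.coord_mem_uIcc j hk) (coord_mem_uIcc_of_mem_segment hz j)⟩

theorem IsStaircaseIn.exists_first_edge_along (h : IsStaircaseIn S γ n) (i : Fin d)
    (hne : γ n i ≠ γ 0 i) (huniq : ∀ z ∈ S, z i = γ 0 i → z = γ 0) :
    ∃ r, r i ≠ γ 0 i ∧ r i ∈ uIcc (γ 0 i) (γ n i) ∧ (∀ j, j ≠ i → r j = γ 0 j) ∧
      segment ℝ (γ 0) r ⊆ S := by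
  classical
  have hex : ∃ m, γ m i ≠ γ 0 i := ⟨n, hne⟩
  obtain ⟨k, hk⟩ : ∃ k, Nat.find hex = k + 1 :=
    Nat.exists_eq_succ_of_ne_zero fun h0 => Nat.find_spec hex (by rw [h0])
  have hkn : k < n := by have := Nat.find_min' hex hne; omega
  have hmove : γ (k + 1) i ≠ γ 0 i := hk ▸ Nat.find_spec hex
  have hγk : γ k = γ 0 := huniq _ ((h.1 k hkn).2 (left_mem_segment ℝ _ _))
    (not_not.1 (Nat.find_min hex (by omega)))
  obtain ⟨i₀, hi₀⟩ := (h.1 k hkn).1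
  obtain rfl : i = i₀ := by
    by_contra hii
    exact hmove (by rw [← hi₀ i hii, hγk])
  refine ⟨γ (k + 1), hmove, h.coord_mem_uIcc i hkn, fun j hj => by rw [← hi₀ j hj, hγk], ?_⟩
  rw [← hγk]
  exact (h.1 k hkn).2

end Staircase

theorem StaircaseConnected.exists_mem_coord_eq {d : ℕ} {S : Set (EucR d)}
    (h : StaircaseConnected S) {p q : EucR d} (hp : p ∈ S) (hq : q ∈ S) (i : Fin d) {v : ℝ}
    (hv : v ∈ uIcc (p i) (q i)) : ∃ z ∈ S, z i = v ∧ ∀ j, z j ∈ uIcc (p j) (q j) := by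
  obtain ⟨n, γ, rfl, rfl, hγ⟩ := h p hp q hq
  exact hγ.exists_mem_coord_eq hp i hv

def OrthStepIn {d : ℕ} (S : Set (EucR d)) (s : Fin d → ℝ) (x y : EucR d) : Prop :=
  IsOrthSeg x y ∧ segment ℝ x y ⊆ S ∧ ∀ i, 0 ≤ s i * (y i - x i)

section OrthStep

variable {d : ℕ} {S : Set (EucR d)} {s : Fin d → ℝ} {x y : EucR d}

theorem OrthStepIn.swap (h : OrthStepIn S s x y) : OrthStepIn S (-s) y x := by
  obtain ⟨⟨i, hi⟩, hseg, hsign⟩ := h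
  refine ⟨⟨i, fun j hj => (hi j hj).symm⟩, segment_symm ℝ y x ▸ hseg, fun j => ?_⟩
  simpa only [Pi.neg_apply, neg_mul_comm, neg_sub] using hsign j

theorem Relation.ReflTransGen.mem_of_orthStepIn (h : ReflTransGen (OrthStepIn S s) x y)
    (hx : x ∈ S) : y ∈ S := by
  rcases h.cases_tail with rfl | ⟨z, -, hzy⟩
  · exact hx
  · exact hzy.2.1 (right_mem_segment ℝ z y)

theorem Relation.ReflTransGen.orthStepIn_symm (h : ReflTransGen (OrthStepIn S s) x y) :
    ReflTransGen (OrthStepIn S (-s)) y x :=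
  ReflTransGen.mono (fun _ _ h => OrthStepIn.swap h) _ _ (ReflTransGen.swap y x h)

theorem exists_staircase_of_reflTransGen (hs : ∀ i, s i ≠ 0)
    (h : ReflTransGen (OrthStepIn S s) x y) :
    ∃ n, ∃ p : ℕ → EucR d, p 0 = x ∧ p n = y ∧ IsStaircaseIn S p n := by
  obtain ⟨n, p, h0, hn, hp⟩ := h.exists_seq
  refine ⟨n, p, h0, hn, fun k hk => ⟨(hp k hk).1, (hp k hk).2.1⟩, fun k hk l hl i _ _ => ?_⟩
  -- both differences have the sign of `s i`
  have := mul_nonneg ((hp k hk).2.2 i) ((hp l hl).2.2 i)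
  have := mul_self_pos.2 (hs i)
  nlinarith

end OrthStep

section Quasiconcave

variable {β : Type*} [LinearOrder β] {s : Set ℝ} {f : ℝ → β}

theorem QuasiconcaveOn.min_le (hf : QuasiconcaveOn ℝ s f) {u v w : ℝ} (hu : u ∈ s) (hw : w ∈ s)
    (hv : v ∈ Icc u w) : min (f u) (f w) ≤ f v :=
  ((hf _).ordConnected.out ⟨hu, min_le_left _ _⟩ ⟨hw, min_le_right _ _⟩ hv).2

theorem quasiconcaveOn_of_min_le (hs : s.OrdConnected)
    (h : ∀ u ∈ s, ∀ w ∈ s, ∀ v ∈ Icc u w, min (f u) (f w) ≤ f v) : QuasiconcaveOn ℝ s f :=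
  fun _ => convex_iff_ordConnected.2
    ⟨fun u hu w hw v hv => ⟨hs.out hu.1 hw.1 hv, (le_min hu.2 hw.2).trans (h u hu.1 w hw.1 v hv)⟩⟩

end Quasiconcave

section Unimodal

variable {f : ℝ → ℝ} {a b c : ℝ}

theorem Unimodal.quasiconcaveOn (h : Unimodal f a b) : QuasiconcaveOn ℝ (Icc a b) f := by
  obtain ⟨c, -, hmono, hanti⟩ := h
  refine quasiconcaveOn_of_min_le ordConnected_Icc fun u hu w hw v hv => ?_
  rcases le_total v c with hvc | hcv
  · exact (min_le_left _ _).trans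
      (hmono ⟨hu.1, hv.1.trans hvc⟩ ⟨hu.1.trans hv.1, hvc⟩ hv.1)
  · exact (min_le_right _ _).trans
      (hanti ⟨hcv, hv.2.trans hw.2⟩ ⟨hcv.trans hv.2, hw.2⟩ hv.2)

theorem QuasiconcaveOn.unimodal (hf : QuasiconcaveOn ℝ (Icc a b) f)
    (hc : c ∈ Ioo a b) (hmax : IsMaxOn f (Icc a b) c) : Unimodal f a b := by
  have hcab : c ∈ Icc a b := Ioo_subset_Icc_self hc
  refine ⟨c, hc, fun u hu v hv huv => ?_, fun u hu v hv huv => ?_⟩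
  · have := hf.min_le ⟨hu.1, hu.2.trans hc.2.le⟩ hcab ⟨huv, hv.2⟩
    rwa [min_eq_left (hmax ⟨hu.1, hu.2.trans hc.2.le⟩)] at this
  · have := hf.min_le hcab ⟨hc.1.le.trans hv.1, hv.2⟩ ⟨hu.1, huv⟩
    rwa [min_eq_right (hmax ⟨hc.1.le.trans hv.1, hv.2⟩)] at this

theorem exists_mem_Ioo_isMaxOn (hmax : ∃ c ∈ Icc a b, IsMaxOn f (Icc a b) c)
    (ha : ∃ c ∈ Ioo a b, f a ≤ f c) (hb : ∃ c ∈ Ioo a b, f b ≤ f c) :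
    ∃ c ∈ Ioo a b, IsMaxOn f (Icc a b) c := by
  obtain ⟨c, hc, hcmax⟩ := hmax
  rcases eq_endpoints_or_mem_Ioo_of_mem_Icc hc with rfl | rfl | hc'
  · obtain ⟨c', hc', hle⟩ := ha
    exact ⟨c', hc', fun x hx => (hcmax hx).trans hle⟩
  · obtain ⟨c', hc', hle⟩ := hb
    exact ⟨c', hc', fun x hx => (hcmax hx).trans hle⟩
  · exact ⟨c, hc', hcmax⟩

theorem Unimodal.exists_le_near_endpoint (h : Unimodal f a b) {e : ℝ}
    (he : e = a ∨ e = b) : ∃ ε > 0, ∀ t ∈ Icc a b, |t - e| < ε → f e ≤ f t := by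
  obtain ⟨c, hc, hmono, hanti⟩ := h
  rcases he with rfl | rfl
  · refine ⟨c - e, by linarith [hc.1], fun t ht hte => ?_⟩
    have htc : t ≤ c := by linarith [(abs_lt.1 hte).2]
    exact hmono ⟨le_rfl, hc.1.le⟩ ⟨ht.1, htc⟩ ht.1
  · refine ⟨e - c, by linarith [hc.2], fun t ht hte => ?_⟩
    have hct : c ≤ t := by linarith [(abs_lt.1 hte).1]
    exact hanti ⟨hct, ht.2⟩ ⟨hc.2.le, le_rfl⟩ ht.2

end Unimodal

@[simp] theorem pt2_apply_zero_s17 (x y : ℝ) : pt2 x y 0 = x := rfl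

@[simp] theorem pt2_apply_one_s17 (x y : ℝ) : pt2 x y 1 = y := rfl

theorem pt2_coords (z : EucR 2) : pt2 (z 0) (z 1) = z := by
  ext i; fin_cases i <;> rfl

theorem continuous_pt2_left (y : ℝ) : Continuous fun x => pt2 x y :=
  (PiLp.continuous_toLp 2 _).comp (continuous_pi fun i => by
    fin_cases i <;> simp [continuous_id', continuous_const])

theorem pt2_mem_segment_vertical {x y₁ y₂ y : ℝ} (hy : y ∈ Icc y₁ y₂) :
    pt2 x y ∈ segment ℝ (pt2 x y₁) (pt2 x y₂) := by
  obtain ⟨s, t, hs, ht, hst, rfl⟩ := (Convex.mem_Icc (hy.1.trans hy.2)).1 hy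
  refine ⟨s, t, hs, ht, hst, ?_⟩
  ext i; fin_cases i
  · simp [pt2, ← add_mul, hst]
  · simp [pt2]

theorem orthStepIn_horizontal {S : Set (EucR 2)} {x x' y : ℝ} (hx : x ≤ x')
    (hS : ∀ t ∈ Icc x x', pt2 t y ∈ S) : OrthStepIn S 1 (pt2 x y) (pt2 x' y) := by
  refine ⟨⟨0, fun j hj => ?_⟩, fun w hw => ?_, fun i => ?_⟩
  · fin_cases j
    · exact absurd rfl hj
    · rfl
  · have hw1 : w 1 = y := by simpa using coord_mem_uIcc_of_mem_segment hw 1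
    have hw0 := coord_mem_uIcc_of_mem_segment hw 0
    rw [pt2_apply_zero_s17, pt2_apply_zero_s17, uIcc_of_le hx] at hw0
    rw [← pt2_coords w, hw1]
    exact hS _ hw0
  · fin_cases i <;> simp [hx]

theorem orthStepIn_vertical {S : Set (EucR 2)} {x y y' : ℝ} (hy : y ≤ y')
    (hS : ∀ t ∈ Icc y y', pt2 x t ∈ S) : OrthStepIn S 1 (pt2 x y) (pt2 x y') := by
  refine ⟨⟨1, fun j hj => ?_⟩, fun w hw => ?_, fun i => ?_⟩
  · fin_cases j
    · rfl
    · exact absurd rfl hj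
  · have hw0 : w 0 = x := by simpa using coord_mem_uIcc_of_mem_segment hw 0
    have hw1 := coord_mem_uIcc_of_mem_segment hw 1
    rw [pt2_apply_one_s17, pt2_apply_one_s17, uIcc_of_le hy] at hw1
    rw [← pt2_coords w, hw0]
    exact hS _ hw1
  · fin_cases i <;> simp [hy]

def reflectY : EucR 2 →ₗ[ℝ] EucR 2 where
  toFun z := pt2 (z 0) (-z 1)
  map_add' u v := by ext i; fin_cases i <;> simp [pt2, add_comm]
  map_smul' c z := by ext i; fin_cases i <;> simp [pt2]

@[simp] theorem reflectY_apply_zero (z : EucR 2) : reflectY z 0 = z 0 := rfl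

@[simp] theorem reflectY_apply_one (z : EucR 2) : reflectY z 1 = -z 1 := rfl

@[simp] theorem reflectY_reflectY (z : EucR 2) : reflectY (reflectY z) = z := by
  ext i; fin_cases i <;> simp

theorem OrthStepIn.map_reflectY {S : Set (EucR 2)} {s : Fin 2 → ℝ} {x y : EucR 2}
    (h : OrthStepIn (reflectY ⁻¹' S) s x y) :
    OrthStepIn S ![s 0, -s 1] (reflectY x) (reflectY y) := by
  obtain ⟨⟨i, hi⟩, hseg, hsign⟩ := h
  refine ⟨⟨i, fun j hj => ?_⟩, ?_, fun j => ?_⟩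
  · have := hi j hj
    fin_cases j <;> simpa using this
  · have := image_segment ℝ reflectY.toAffineMap x y
    simp only [LinearMap.coe_toAffineMap] at this
    exact this ▸ image_subset_iff.2 hseg
  · fin_cases j
    · simpa using hsign 0
    · show 0 ≤ -s 1 * (-y 1 - -x 1)
      linarith [hsign 1]

theorem exists_mem_eq_of_mem_closure {X : Type*} [TopologicalSpace X] {f : X → ℝ}
    (hf : Continuous f) {U : Set X} (hU : IsPreconnected U) {x y : X} (hx : x ∈ closure U)
    (hy : y ∈ closure U) {v : ℝ} (hv : v ∈ Ioo (f x) (f y)) : ∃ w ∈ U, f w = v := by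
  have approx : ∀ z ∈ closure U, ∀ V : Set ℝ, IsOpen V → f z ∈ V → ∃ w ∈ U, f w ∈ V :=
    fun z hz V hV hzV => by
      obtain ⟨w, hwV, hwU⟩ := mem_closure_iff.1 hz _ (hV.preimage hf) hzV
      exact ⟨w, hwU, hwV⟩
  obtain ⟨w₁, hw₁, h₁⟩ := approx x hx _ isOpen_Iio hv.1
  obtain ⟨w₂, hw₂, h₂⟩ := approx y hy _ isOpen_Ioi hv.2
  exact (hU.image f hf.continuousOn).ordConnected.out (mem_image_of_mem f hw₁)
    (mem_image_of_mem f hw₂) ⟨le_of_lt h₁, le_of_lt h₂⟩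

theorem exists_pt2_mem_of_mem_interior {S : Set (EucR 2)} {z : EucR 2} (hz : z ∈ interior S) :
    ∃ ε > 0, ∀ t, |t - z 0| < ε → pt2 t (z 1) ∈ S := by
  have hS : S ∈ nhds (pt2 (z 0) (z 1)) := by rw [pt2_coords]; exact mem_interior_iff_mem_nhds.1 hz
  obtain ⟨ε, hε, hball⟩ :=
    Metric.mem_nhds_iff.1 ((continuous_pt2_left (z 1)).continuousAt.preimage_mem_nhds hS)
  exact ⟨ε, hε, fun t ht => hball (by rwa [Metric.mem_ball, Real.dist_eq])⟩

def closedRegionBetween (gm gp : ℝ → ℝ) (a b : ℝ) : Set (EucR 2) :=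
  {z | z 0 ∈ Icc a b ∧ gm (z 0) ≤ z 1 ∧ z 1 ≤ gp (z 0)}

def HasLocalHorizontalChords (gm gp : ℝ → ℝ) (a b : ℝ) : Prop :=
  ∀ x₀ ∈ Icc a b, ∃ ε > 0, ∃ y, ∀ t ∈ Icc a b, |t - x₀| < ε → gm t ≤ y ∧ y ≤ gp t

section Region

variable {gm gp : ℝ → ℝ} {a b : ℝ}

@[simp] theorem pt2_mem_closedRegionBetween {x y : ℝ} :
    pt2 x y ∈ closedRegionBetween gm gp a b ↔ x ∈ Icc a b ∧ gm x ≤ y ∧ y ≤ gp x :=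
  Iff.rfl

theorem reflectY_preimage_closedRegionBetween :
    reflectY ⁻¹' closedRegionBetween gm gp a b =
      closedRegionBetween (fun x => -gp x) (fun x => -gm x) a b := by
  ext z
  simp only [mem_preimage, closedRegionBetween, mem_ofPred_eq, reflectY_apply_zero,
    reflectY_apply_one, le_neg, neg_le]
  exact and_congr_right fun _ => and_comm

theorem HasLocalHorizontalChords.neg (h : HasLocalHorizontalChords gm gp a b) :
    HasLocalHorizontalChords (fun x => -gp x) (fun x => -gm x) a b := fun x₀ hx₀ => by
  obtain ⟨ε, hε, y, hy⟩ := h x₀ hx₀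
  exact ⟨ε, hε, -y, fun t ht hte => ⟨neg_le_neg (hy t ht hte).2, neg_le_neg (hy t ht hte).1⟩⟩

theorem eq_closedRegionBetween {A : Set (EucR 2)}
    (hvc : ∀ p ∈ A, ∀ q ∈ A, p 0 = q 0 → segment ℝ p q ⊆ A)
    (hab : ∀ x, (∃ y, pt2 x y ∈ A) ↔ x ∈ Icc a b)
    (hgp : ∀ x ∈ Icc a b, IsGreatest {y | pt2 x y ∈ A} (gp x))
    (hgm : ∀ x ∈ Icc a b, IsLeast {y | pt2 x y ∈ A} (gm x)) :
    A = closedRegionBetween gm gp a b := by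
  ext z
  rw [← pt2_coords z, pt2_mem_closedRegionBetween]
  constructor
  · intro hz
    have hx := (hab _).1 ⟨_, hz⟩
    exact ⟨hx, (hgm _ hx).2 hz, (hgp _ hx).2 hz⟩
  · rintro ⟨hx, h₁, h₂⟩
    exact hvc _ (hgm _ hx).1 _ (hgp _ hx).1 rfl (pt2_mem_segment_vertical ⟨h₁, h₂⟩)

theorem lt_of_interior_closedRegionBetween_nonempty
    (h : (interior (closedRegionBetween gm gp a b)).Nonempty) : a < b := by
  obtain ⟨z, hz⟩ := h
  obtain ⟨ε, hε, hball⟩ := exists_pt2_mem_of_mem_interior hz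
  have h₁ := (hball (z 0 - ε / 2) (by rw [abs_lt]; constructor <;> linarith)).1
  have h₂ := (hball (z 0 + ε / 2) (by rw [abs_lt]; constructor <;> linarith)).1
  simp only [pt2_apply_zero_s17, mem_Icc] at h₁ h₂
  linarith

theorem hasLocalHorizontalChords_of_unimodal
    (hcl : closedRegionBetween gm gp a b ⊆ closure (interior (closedRegionBetween gm gp a b)))
    (hconn : IsPreconnected (interior (closedRegionBetween gm gp a b)))
    (hp : Unimodal gp a b) (hm : Unimodal (fun x => -gm x) a b) (ha : gp a = gm a)
    (hb : gp b = gm b) : HasLocalHorizontalChords gm gp a b := by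
  intro x₀ hx₀
  have endpoint : ∀ e, e = a ∨ e = b → gp e = gm e →
      ∃ ε > 0, ∃ y, ∀ t ∈ Icc a b, |t - e| < ε → gm t ≤ y ∧ y ≤ gp t := by
    intro e he hpinch
    obtain ⟨ε₁, hε₁, h₁⟩ := hp.exists_le_near_endpoint he
    obtain ⟨ε₂, hε₂, h₂⟩ := hm.exists_le_near_endpoint he
    refine ⟨min ε₁ ε₂, lt_min hε₁ hε₂, gp e, fun t ht hte =>
      ⟨?_, h₁ t ht (hte.trans_le (min_le_left _ _))⟩⟩
    linarith [h₂ t ht (hte.trans_le (min_le_right _ _))]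
  rcases eq_endpoints_or_mem_Ioo_of_mem_Icc hx₀ with rfl | rfl | hx₀'
  · exact endpoint _ (Or.inl rfl) ha
  · exact endpoint _ (Or.inr rfl) hb
  -- at an inner abscissa, the connected interior must cross the vertical line
  have hab : a ≤ b := hx₀.1.trans hx₀.2
  obtain ⟨z, hz, rfl⟩ := exists_mem_eq_of_mem_closure (f := fun z : EucR 2 => z 0) (by fun_prop)
    hconn (x := pt2 a (gp a)) (y := pt2 b (gp b)) (hcl ⟨left_mem_Icc.2 hab, ha.ge, le_rfl⟩)
    (hcl ⟨right_mem_Icc.2 hab, hb.ge, le_rfl⟩) hx₀'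
  obtain ⟨ε, hε, hball⟩ := exists_pt2_mem_of_mem_interior hz
  exact ⟨ε, hε, z 1, fun t _ hte => (hball t hte).2⟩

theorem reflTransGen_orthStepIn_up_right (hp : QuasiconcaveOn ℝ (Icc a b) gp)
    (hm : QuasiconcaveOn ℝ (Icc a b) fun x => -gm x) {u w y h : ℝ} (hu : u ∈ Icc a b)
    (hw : w ∈ Icc a b) (huw : u ≤ w) (hyh : y ≤ h) (hmu : gm u ≤ y) (hpu : h ≤ gp u)
    (hmw : gm w ≤ h) (hpw : h ≤ gp w) :
    ReflTransGen (OrthStepIn (closedRegionBetween gm gp a b) 1) (pt2 u y) (pt2 w h) := by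
  refine .head (orthStepIn_vertical hyh fun t ht => ⟨hu, hmu.trans ht.1, ht.2.trans hpu⟩)
    (.single (orthStepIn_horizontal huw fun t ht => ?_))
  have hgm := (le_min (neg_le_neg (hmu.trans hyh)) (neg_le_neg hmw)).trans (hm.min_le hu hw ht)
  exact pt2_mem_closedRegionBetween.2 ⟨⟨hu.1.trans ht.1, ht.2.trans hw.2⟩, by linarith,
    (le_min hpu hpw).trans (hp.min_le hu hw ht)⟩

theorem reflTransGen_orthStepIn_of_le (hp : QuasiconcaveOn ℝ (Icc a b) gp)
    (hm : QuasiconcaveOn ℝ (Icc a b) fun x => -gm x)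
    (hchords : HasLocalHorizontalChords gm gp a b) {p q : EucR 2}
    (hpR : p ∈ closedRegionBetween gm gp a b) (hqR : q ∈ closedRegionBetween gm gp a b)
    (h0 : p 0 ≤ q 0) (h1 : p 1 ≤ q 1) :
    ReflTransGen (OrthStepIn (closedRegionBetween gm gp a b) 1) p q := by
  set R := closedRegionBetween gm gp a b
  obtain ⟨hqab, hmq, hpq⟩ := hqR
  by_contra hunreach
  set T : Set ℝ := {x | x ≤ q 0 ∧ ∃ y ≤ q 1, ReflTransGen (OrthStepIn R 1) p (pt2 x y)}
  have below : ∀ x ∈ T, gp x < q 1 := by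
    rintro x ⟨hxq, y, hyq, hreach⟩
    by_contra! hqx
    obtain ⟨hxab, hmx, -⟩ := pt2_mem_closedRegionBetween.1 (hreach.mem_of_orthStepIn hpR)
    exact hunreach (pt2_coords q ▸ hreach.trans
      (reflTransGen_orthStepIn_up_right hp hm hxab hqab hxq hyq hmx hqx hmq hpq))
  have step : ∀ t ∈ T, ∀ s ∈ Icc t (q 0), gm s ≤ gp t → s ∈ T := by
    rintro t ht s hs hst
    have hgt := below t ht
    obtain ⟨-, y, -, hreach⟩ := ht
    obtain ⟨htab, hmt, hyt⟩ := pt2_mem_closedRegionBetween.1 (hreach.mem_of_orthStepIn hpR)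
    have hsab : s ∈ Icc a b := ⟨htab.1.trans hs.1, hs.2.trans hqab.2⟩
    have hts : gp t ≤ gp s := by
      have := hp.min_le htab hqab hs
      rwa [min_eq_left (hgt.le.trans hpq)] at this
    exact ⟨hs.2, gp t, hgt.le, hreach.trans
      (reflTransGen_orthStepIn_up_right hp hm htab hsab hs.1 hyt hmt le_rfl hst hts)⟩
  have hTab : ∀ x ∈ T, x ∈ Icc a b := fun x ⟨_, _, _, hreach⟩ =>
    (pt2_mem_closedRegionBetween.1 (hreach.mem_of_orthStepIn hpR)).1
  have hpT : p 0 ∈ T := ⟨h0, p 1, h1, by rw [pt2_coords]⟩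
  have hTbdd : BddAbove T := ⟨q 0, fun x hx => hx.1⟩
  set xs := sSup T
  have hxsq : xs ≤ q 0 := csSup_le ⟨_, hpT⟩ fun x hx => hx.1
  have hpxs : p 0 ≤ xs := le_csSup hTbdd hpT
  obtain ⟨ε, hε, y₀, hy₀⟩ := hchords xs ⟨hpR.1.1.trans hpxs, hxsq.trans hqab.2⟩
  obtain ⟨t, htT, hlt⟩ := exists_lt_of_lt_csSup ⟨_, hpT⟩ (sub_lt_self xs hε)
  have htxs : t ≤ xs := le_csSup hTbdd htT
  -- the chord through `xs` carries us from `t` to `s`, strictly beyond `xs` unless `s = q 0`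
  set s := min (xs + ε / 2) (q 0)
  have hxss : xs ≤ s := le_min (by linarith) hxsq
  have hsab : s ∈ Icc a b :=
    ⟨(hTab t htT).1.trans (htxs.trans hxss), (min_le_right _ _).trans hqab.2⟩
  have hsT : s ∈ T := step t htT s ⟨htxs.trans hxss, min_le_right _ _⟩
    ((hy₀ s hsab (abs_lt.2 ⟨by linarith, by linarith [min_le_left (xs + ε / 2) (q 0)]⟩)).1.trans
      (hy₀ t (hTab t htT) (abs_lt.2 ⟨by linarith, by linarith⟩)).2)
  have hsq : s = q 0 := by
    have := le_csSup hTbdd hsT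
    rcases min_choice (xs + ε / 2) (q 0) with h | h
    · linarith
    · exact h
  exact (below _ (hsq ▸ hsT)).not_ge hpq

theorem staircaseConnected_closedRegionBetween (hp : QuasiconcaveOn ℝ (Icc a b) gp)
    (hm : QuasiconcaveOn ℝ (Icc a b) fun x => -gm x)
    (hchords : HasLocalHorizontalChords gm gp a b) :
    StaircaseConnected (closedRegionBetween gm gp a b) := by
  set R := closedRegionBetween gm gp a b
  have hNE : ∀ p ∈ R, ∀ q ∈ R, p 0 ≤ q 0 → p 1 ≤ q 1 → ReflTransGen (OrthStepIn R 1) p q :=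
    fun p hpR q hqR => reflTransGen_orthStepIn_of_le hp hm hchords hpR hqR
  -- south-east moves are north-east moves in the mirror image `reflectY ⁻¹' R`
  have hSE : ∀ p ∈ R, ∀ q ∈ R, p 0 ≤ q 0 → q 1 ≤ p 1 →
      ReflTransGen (OrthStepIn R ![1, -1]) p q := by
    intro p hpR q hqR h0 h1
    have hmirror := reflTransGen_orthStepIn_of_le hm (by simpa using hp) hchords.neg
      (p := reflectY p) (q := reflectY q)
      (by rwa [← reflectY_preimage_closedRegionBetween, mem_preimage, reflectY_reflectY])
      (by rwa [← reflectY_preimage_closedRegionBetween, mem_preimage, reflectY_reflectY])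
      (by simpa using h0) (by simpa using h1)
    rw [← reflectY_preimage_closedRegionBetween] at hmirror
    simpa [Function.onFun] using
      ReflTransGen.lift reflectY (fun _ _ h => h.map_reflectY) _ _ hmirror
  intro x hx y hy
  rcases le_total (x 0) (y 0) with h0 | h0 <;> rcases le_total (x 1) (y 1) with h1 | h1
  · exact exists_staircase_of_reflTransGen (fun _ => one_ne_zero) (hNE x hx y hy h0 h1)
  · exact exists_staircase_of_reflTransGen (fun i => by fin_cases i <;> norm_num)
      (hSE x hx y hy h0 h1)
  · exact exists_staircase_of_reflTransGen (fun i => by fin_cases i <;> norm_num)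
      (hSE y hy x hx h0 h1).orthStepIn_symm
  · exact exists_staircase_of_reflTransGen (fun _ => by norm_num)
      (hNE y hy x hx h0 h1).orthStepIn_symm

theorem StaircaseConnected.quasiconcaveOn_upper
    (h : StaircaseConnected (closedRegionBetween gm gp a b)) (hle : ∀ x ∈ Icc a b, gm x ≤ gp x) :
    QuasiconcaveOn ℝ (Icc a b) gp := by
  refine quasiconcaveOn_of_min_le ordConnected_Icc fun u hu w hw v hv => ?_
  obtain ⟨z, hz, rfl, hzy⟩ := h.exists_mem_coord_eq (p := pt2 u (gp u)) (q := pt2 w (gp w))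
    ⟨hu, hle u hu, le_rfl⟩ ⟨hw, hle w hw, le_rfl⟩ 0 (Icc_subset_uIcc hv)
  exact (hzy 1).1.trans hz.2.2

theorem StaircaseConnected.quasiconcaveOn_lower
    (h : StaircaseConnected (closedRegionBetween gm gp a b)) (hle : ∀ x ∈ Icc a b, gm x ≤ gp x) :
    QuasiconcaveOn ℝ (Icc a b) fun x => -gm x := by
  refine quasiconcaveOn_of_min_le ordConnected_Icc fun u hu w hw v hv => ?_
  obtain ⟨z, hz, rfl, hzy⟩ := h.exists_mem_coord_eq (p := pt2 u (gm u)) (q := pt2 w (gm w))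
    ⟨hu, le_rfl, hle u hu⟩ ⟨hw, le_rfl, hle w hw⟩ 0 (Icc_subset_uIcc hv)
  rw [min_neg_neg, neg_le_neg_iff]
  exact hz.2.1.trans (hzy 1).2

theorem StaircaseConnected.exists_mem_Ioo_level
    (h : StaircaseConnected (closedRegionBetween gm gp a b)) {e e' : ℝ} (he : e ∈ Icc a b)
    (he' : e' ∈ Icc a b) (hne : e ≠ e') (hpinch : gp e = gm e) (hle' : gm e' ≤ gp e') :
    ∃ c ∈ Ioo a b, gm c ≤ gp e ∧ gp e ≤ gp c := by
  obtain ⟨n, γ, h0, hn, hγ⟩ :=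
    h (pt2 e (gp e)) ⟨he, hpinch.ge, le_rfl⟩ (pt2 e' (gp e')) ⟨he', hle', le_rfl⟩
  -- `(e, gp e)` is the only point of the region above `e`, so the staircase leaves it sideways
  have huniq : ∀ z ∈ closedRegionBetween gm gp a b, z 0 = γ 0 0 → z = γ 0 := by
    rintro z ⟨-, hz₁, hz₂⟩ hz0
    rw [h0, pt2_apply_zero_s17] at hz0
    rw [h0, ← pt2_coords z, hz0]
    rw [hz0] at hz₁ hz₂
    congr 1
    linarith
  obtain ⟨r, hr0, hr0', hr1, hseg⟩ :=
    hγ.exists_first_edge_along 0 (by simpa [h0, hn] using hne.symm) huniq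
  rw [h0] at hr0 hr1 hseg
  rw [h0, hn] at hr0'
  simp only [pt2_apply_zero_s17] at hr0 hr0'
  have hr1' : r 1 = gp e := by simpa using hr1 1 (by decide)
  set m : EucR 2 := (1 / 2 : ℝ) • pt2 e (gp e) + (1 / 2 : ℝ) • r
  obtain ⟨-, hm₁, hm₂⟩ : m ∈ closedRegionBetween gm gp a b :=
    hseg ⟨1 / 2, 1 / 2, by norm_num, by norm_num, by norm_num, rfl⟩
  have hm0 : m 0 = (e + r 0) / 2 := by
    simp only [m, PiLp.add_apply, PiLp.smul_apply, smul_eq_mul, pt2_apply_zero_s17]; ring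
  have hm1 : m 1 = gp e := by
    simp only [m, PiLp.add_apply, PiLp.smul_apply, smul_eq_mul, pt2_apply_one_s17, hr1']; ring
  rw [hm1] at hm₁ hm₂
  have hr : r 0 ∈ Icc a b := uIcc_subset_Icc he he' hr0'
  refine ⟨m 0, ?_, hm₁, hm₂⟩
  rw [hm0]
  rcases lt_or_gt_of_ne hr0 with hlt | hlt <;> constructor <;> linarith [he.1, he.2, hr.1, hr.2]

theorem IsCompact.exists_isMaxOn_closedRegionBetween
    (hR : IsCompact (closedRegionBetween gm gp a b)) (hab : a ≤ b)
    (hle : ∀ x ∈ Icc a b, gm x ≤ gp x) :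
    (∃ c ∈ Icc a b, IsMaxOn gp (Icc a b) c) ∧
      ∃ c ∈ Icc a b, IsMaxOn (fun x => -gm x) (Icc a b) c := by
  have hne : (closedRegionBetween gm gp a b).Nonempty :=
    ⟨pt2 a (gp a), left_mem_Icc.2 hab, hle a (left_mem_Icc.2 hab), le_rfl⟩
  have hcont : ContinuousOn (fun z : EucR 2 => z 1) (closedRegionBetween gm gp a b) := by fun_prop
  obtain ⟨zM, hzM, hmax⟩ := hR.exists_isMaxOn hne hcont
  obtain ⟨zm, hzm, hmin⟩ := hR.exists_isMinOn hne hcont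
  refine ⟨⟨zM 0, hzM.1, fun x hx => ?_⟩, zm 0, hzm.1, fun x hx => ?_⟩
  · exact (hmax (show pt2 x (gp x) ∈ _ from ⟨hx, hle x hx, le_rfl⟩)).trans hzM.2.2
  · exact neg_le_neg (hzm.2.1.trans
      (hmin (show pt2 x (gm x) ∈ _ from ⟨hx, le_rfl, hle x hx⟩)))

theorem StaircaseConnected.unimodal (h : StaircaseConnected (closedRegionBetween gm gp a b))
    (hR : IsCompact (closedRegionBetween gm gp a b)) (hab : a < b)
    (hle : ∀ x ∈ Icc a b, gm x ≤ gp x) (ha : gp a = gm a) (hb : gp b = gm b) :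
    Unimodal gp a b ∧ Unimodal (fun x => -gm x) a b := by
  have haI := left_mem_Icc.2 hab.le
  have hbI := right_mem_Icc.2 hab.le
  obtain ⟨ca, hca, hmca, hpca⟩ := h.exists_mem_Ioo_level haI hbI hab.ne ha (hle b hbI)
  obtain ⟨cb, hcb, hmcb, hpcb⟩ := h.exists_mem_Ioo_level hbI haI hab.ne' hb (hle a haI)
  obtain ⟨hmaxp, hmaxm⟩ := hR.exists_isMaxOn_closedRegionBetween hab.le hle
  obtain ⟨cp, hcp, hp⟩ := exists_mem_Ioo_isMaxOn hmaxp ⟨ca, hca, hpca⟩ ⟨cb, hcb, hpcb⟩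
  obtain ⟨cm, hcm, hm⟩ := exists_mem_Ioo_isMaxOn hmaxm
    ⟨ca, hca, neg_le_neg (ha ▸ hmca)⟩ ⟨cb, hcb, neg_le_neg (hb ▸ hmcb)⟩
  exact ⟨(h.quasiconcaveOn_upper hle).unimodal hcp hp,
    (h.quasiconcaveOn_lower hle).unimodal hcm hm⟩

end Region

theorem staircaseConnected_iff_unimodal_general (A : Set (EucR 2))
    (hcomp : IsCompact A) (hcl : A = closure (interior A))
    (hconn : IsConnected (interior A))
    (hvc : ∀ p ∈ A, ∀ q ∈ A, p 0 = q 0 → segment ℝ p q ⊆ A)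
    (a b : ℝ) (fp fm : ℝ → ℝ)
    (hab : ∀ x : ℝ, (∃ y, pt2 x y ∈ A) ↔ x ∈ Icc a b)
    (hfp : ∀ x ∈ Icc a b, IsGreatest {y | pt2 x y ∈ A} (fp x))
    (hfm : ∀ x ∈ Icc a b, IsLeast {y | pt2 x y ∈ A} (fm x))
    (hnorm : fp a = fm a ∧ fp b = fm b) :
    StaircaseConnected A ↔ (Unimodal fp a b ∧ Unimodal (fun x => -(fm x)) a b) := by
  have hle : ∀ x ∈ Icc a b, fm x ≤ fp x := fun x hx => (hfp x hx).2 (hfm x hx).1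
  obtain rfl := eq_closedRegionBetween hvc hab hfp hfm
  have hab' : a < b := lt_of_interior_closedRegionBetween_nonempty hconn.nonempty
  refine ⟨fun h => h.unimodal hcomp hab' hle hnorm.1 hnorm.2, fun ⟨hp, hm⟩ => ?_⟩
  exact staircaseConnected_closedRegionBetween hp.quasiconcaveOn hm.quasiconcaveOn
    (hasLocalHorizontalChords_of_unimodal hcl.subset hconn.isPreconnected hp hm hnorm.1 hnorm.2)

/-- A normal, vertically convex set `A ⊆ ℝ²` which is the closure of its bounded
connected interior is staircase connected iff `f⁺` and `-f⁻` are unimodal. -/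
theorem staircaseConnected_iff_unimodal (A : Set (EucR 2))
    (hcomp : IsCompact A) (hcl : A = closure (interior A))
    (hbd : IsBounded (interior A)) (hconn : IsConnected (interior A))
    (hvc : ∀ p ∈ A, ∀ q ∈ A, p 0 = q 0 → segment ℝ p q ⊆ A)
    (a b : ℝ) (fp fm : ℝ → ℝ)
    (hab : ∀ x : ℝ, (∃ y, pt2 x y ∈ A) ↔ x ∈ Icc a b)
    (hfp : ∀ x ∈ Icc a b, IsGreatest {y | pt2 x y ∈ A} (fp x))
    (hfm : ∀ x ∈ Icc a b, IsLeast {y | pt2 x y ∈ A} (fm x))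
    (hnorm : fp a = fm a ∧ fp b = fm b) :
    StaircaseConnected A ↔ (Unimodal fp a b ∧ Unimodal (fun x => -(fm x)) a b) :=
  staircaseConnected_iff_unimodal_general A hcomp hcl hconn hvc a b fp fm hab hfp hfm hnorm
end
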